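/- arXiv:2012.14566 — 4 statements merged into one kernel-verified Lean document; each statement's English description precedes it below -/
import Mathlib

section
/- The iteration sequence defined by m_{s,0} := m₀ for all s and m_{·,n+1} := F(m_{·,n}) is non-decreasing in n for each state s, is bounded above by M₀, hence converges; and its pointwise limit m : S → ℝ satisfies the fixed point equation m(s) = min_{x ∈ X s} max_{y ∈ Y s} (λ·m(T(x,y;s)) + U_λ(x,y;s)) for every s ∈ S. -/
open Filter Topology

/-- The Bellman min–max operator: `F(m)(s) = min_x max_y (λ·m(T(x,y;s)) + (1−λ)·U(x,y;s))`,
where `(1−λ)·U` is the rescaled utility `U_λ`. -/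
noncomputable def bellmanMinMax {S : Type*} (X Y : S → Type*)
    [∀ s, Fintype (X s)] [∀ s, Nonempty (X s)]
    [∀ s, Fintype (Y s)] [∀ s, Nonempty (Y s)]
    (T : ∀ s, X s → Y s → S) (U : ∀ s, X s → Y s → ℝ) (lam : ℝ)
    (m : S → ℝ) (s : S) : ℝ :=
  Finset.univ.inf' Finset.univ_nonempty fun x : X s =>
    Finset.univ.sup' Finset.univ_nonempty fun y : Y s =>
      lam * m (T s x y) + (1 - lam) * U s x y

/-- The Bellman max–min operator: `G(M)(s) = max_x min_y (λ·M(T(x,y;s)) + (1−λ)·U(x,y;s))`. -/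
noncomputable def bellmanMaxMin {S : Type*} (X Y : S → Type*)
    [∀ s, Fintype (X s)] [∀ s, Nonempty (X s)]
    [∀ s, Fintype (Y s)] [∀ s, Nonempty (Y s)]
    (T : ∀ s, X s → Y s → S) (U : ∀ s, X s → Y s → ℝ) (lam : ℝ)
    (M : S → ℝ) (s : S) : ℝ :=
  Finset.univ.sup' Finset.univ_nonempty fun x : X s =>
    Finset.univ.inf' Finset.univ_nonempty fun y : Y s =>
      lam * M (T s x y) + (1 - lam) * U s x y

/-- `m₀`, the minimum of the utility over all state–action triples. -/
noncomputable def utilMin {S : Type*} [Fintype S] [Nonempty S] (X Y : S → Type*)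
    [∀ s, Fintype (X s)] [∀ s, Nonempty (X s)]
    [∀ s, Fintype (Y s)] [∀ s, Nonempty (Y s)]
    (U : ∀ s, X s → Y s → ℝ) : ℝ :=
  haveI : Nonempty ((s : S) × X s × Y s) :=
    ⟨⟨Classical.arbitrary S, Classical.arbitrary _, Classical.arbitrary _⟩⟩
  Finset.univ.inf' Finset.univ_nonempty fun p : Σ s : S, X s × Y s => U p.1 p.2.1 p.2.2

/-- `M₀`, the maximum of the utility over all state–action triples. -/
noncomputable def utilMax {S : Type*} [Fintype S] [Nonempty S] (X Y : S → Type*)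
    [∀ s, Fintype (X s)] [∀ s, Nonempty (X s)]
    [∀ s, Fintype (Y s)] [∀ s, Nonempty (Y s)]
    (U : ∀ s, X s → Y s → ℝ) : ℝ :=
  haveI : Nonempty ((s : S) × X s × Y s) :=
    ⟨⟨Classical.arbitrary S, Classical.arbitrary _, Classical.arbitrary _⟩⟩
  Finset.univ.sup' Finset.univ_nonempty fun p : Σ s : S, X s × Y s => U p.1 p.2.1 p.2.2

/-- The iteration `m_{·,0} = const m₀`, `m_{·,n+1} = F(m_{·,n})` is
non-decreasing in `n` at each state, bounded above by `M₀`, hence converges, and its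
pointwise limit satisfies the min–max fixed point equation. -/
theorem bellman_minmax_iteration_converges
    {S : Type*} [Fintype S] [Nonempty S]
    (X Y : S → Type*)
    [∀ s, Fintype (X s)] [∀ s, Nonempty (X s)]
    [∀ s, Fintype (Y s)] [∀ s, Nonempty (Y s)]
    (T : ∀ s, X s → Y s → S) (U : ∀ s, X s → Y s → ℝ)
    (lam : ℝ) (hlam : lam ∈ Set.Ioo (0 : ℝ) 1) :
    (∀ s, Monotone fun n : ℕ =>
      (bellmanMinMax X Y T U lam)^[n] (fun _ => utilMin X Y U) s) ∧
    (∀ n : ℕ, ∀ s,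
      (bellmanMinMax X Y T U lam)^[n] (fun _ => utilMin X Y U) s ≤ utilMax X Y U) ∧
    (∃ m : S → ℝ,
      (∀ s, Filter.Tendsto
        (fun n : ℕ => (bellmanMinMax X Y T U lam)^[n] (fun _ => utilMin X Y U) s)
        Filter.atTop (nhds (m s))) ∧
      (∀ s, m s = bellmanMinMax X Y T U lam m s)) := by
  obtain ⟨hl0, hl1⟩ := hlam
  set F := bellmanMinMax X Y T U lam with hF
  set m0 := utilMin X Y U with hm0
  set M0 := utilMax X Y U with hM0
  have hUlb : ∀ s (x : X s) (y : Y s), m0 ≤ U s x y := by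
    intro s x y
    exact Finset.inf'_le _ (Finset.mem_univ (⟨s, x, y⟩ : Σ s : S, X s × Y s))
  have hUub : ∀ s (x : X s) (y : Y s), U s x y ≤ M0 := by
    intro s x y
    exact Finset.le_sup' (f := fun p : Σ s : S, X s × Y s => U p.1 p.2.1 p.2.2)
      (Finset.mem_univ (⟨s, x, y⟩ : Σ s : S, X s × Y s))
  -- monotonicity of F
  have hFmono : ∀ a b : S → ℝ, (∀ t, a t ≤ b t) → ∀ s, F a s ≤ F b s := by
    intro a b hab s
    apply Finset.le_inf'
    intro x hx
    refine le_trans (Finset.inf'_le _ hx) ?_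
    apply Finset.sup'_le
    intro y hy
    refine le_trans ?_ (Finset.le_sup' _ hy)
    have := hab (T s x y)
    nlinarith
  -- F maps [≥ m0] into [≥ m0]
  have hFlb : ∀ a : S → ℝ, (∀ t, m0 ≤ a t) → ∀ s, m0 ≤ F a s := by
    intro a ha s
    apply Finset.le_inf'
    intro x _
    refine le_trans ?_ (Finset.le_sup' _ (Finset.mem_univ (Classical.arbitrary (Y s))))
    have h1 := ha (T s x (Classical.arbitrary (Y s)))
    have h2 := hUlb s x (Classical.arbitrary (Y s))
    nlinarith
  have hFub : ∀ a : S → ℝ, (∀ t, a t ≤ M0) → ∀ s, F a s ≤ M0 := by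
    intro a ha s
    refine le_trans (Finset.inf'_le _ (Finset.mem_univ (Classical.arbitrary (X s)))) ?_
    apply Finset.sup'_le
    intro y _
    have h1 := ha (T s (Classical.arbitrary (X s)) y)
    have h2 := hUub s (Classical.arbitrary (X s)) y
    nlinarith
  set seq : ℕ → S → ℝ := fun n => F^[n] (fun _ => m0) with hseq
  have hstep : ∀ n, seq (n + 1) = F (seq n) := by
    intro n
    simp [hseq, Function.iterate_succ_apply']
  -- every seq n is ≥ m0 and ≤ M0
  have hlb : ∀ n t, m0 ≤ seq n t := by
    intro n
    induction n with
    | zero => intro t; simp [hseq]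
    | succ k ih => rw [hstep]; exact hFlb _ ih
  have hub : ∀ n t, seq n t ≤ M0 := by
    intro n
    induction n with
    | zero =>
      intro t
      simp only [hseq, Function.iterate_zero, id]
      have := hUlb t (Classical.arbitrary (X t)) (Classical.arbitrary (Y t))
      have := hUub t (Classical.arbitrary (X t)) (Classical.arbitrary (Y t))
      linarith
    | succ k ih => rw [hstep]; exact hFub _ ih
  have hmono : ∀ n t, seq n t ≤ seq (n + 1) t := by
    intro n
    induction n with
    | zero =>
      intro t
      have := hlb 1 t
      simpa [hseq] using this
    | succ k ih =>
      rw [hstep, hstep]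
      exact hFmono _ _ ih
  have hmono' : ∀ s, Monotone fun n => seq n s :=
    fun s => monotone_nat_of_le_succ fun n => hmono n s
  refine ⟨hmono', fun n s => hub n s, ?_⟩
  set m : S → ℝ := fun s => ⨆ n, seq n s with hm
  have hbdd : ∀ s, BddAbove (Set.range fun n => seq n s) := by
    intro s
    exact ⟨M0, by rintro _ ⟨n, rfl⟩; exact hub n s⟩
  have htendsto : ∀ s, Tendsto (fun n => seq n s) atTop (nhds (m s)) := by
    intro s
    exact tendsto_atTop_ciSup (hmono' s) (hbdd s)
  refine ⟨m, htendsto, ?_⟩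
  intro s
  have h1 : Tendsto (fun n => F (seq n) s) atTop (nhds (m s)) := by
    have h0 : Tendsto (fun n => seq (n + 1) s) atTop (nhds (m s)) :=
      (htendsto s).comp (tendsto_add_atTop_nat 1)
    simpa only [hstep] using h0
  have h2 : Tendsto (fun n => F (seq n) s) atTop (nhds (F m s)) := by
    simp only [hF, bellmanMinMax]
    apply Filter.Tendsto.finset_inf'_nhds_apply
    intro x _
    apply Filter.Tendsto.finset_sup'_nhds_apply
    intro y _
    exact ((htendsto (T s x y)).const_mul lam).add tendsto_const_nhds
  exact tendsto_nhds_unique h1 h2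
end

section
/- The iteration sequence defined by M_{s,0} := M₀ for all s and M_{·,n+1} := G(M_{·,n}) is non-increasing in n for each state s, is bounded below by m₀, hence converges; and its pointwise limit M : S → ℝ satisfies the fixed point equation M(s) = max_{x ∈ X s} min_{y ∈ Y s} (λ·M(T(x,y;s)) + U_λ(x,y;s)) for every s ∈ S. -/
open Filter Topology

section aux
variable {S : Type*} [Fintype S] [Nonempty S]
    (X Y : S → Type*)
    [∀ s, Fintype (X s)] [∀ s, Nonempty (X s)]
    [∀ s, Fintype (Y s)] [∀ s, Nonempty (Y s)]
    (T : ∀ s, X s → Y s → S) (U : ∀ s, X s → Y s → ℝ)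
    (lam : ℝ)

lemma utilMin_le (s : S) (x : X s) (y : Y s) : utilMin X Y U ≤ U s x y := by
  haveI : Nonempty ((s : S) × X s × Y s) :=
    ⟨⟨Classical.arbitrary S, Classical.arbitrary _, Classical.arbitrary _⟩⟩
  exact Finset.inf'_le _ (Finset.mem_univ (⟨s, x, y⟩ : Σ s : S, X s × Y s))

lemma le_utilMax (s : S) (x : X s) (y : Y s) : U s x y ≤ utilMax X Y U := by
  haveI : Nonempty ((s : S) × X s × Y s) :=
    ⟨⟨Classical.arbitrary S, Classical.arbitrary _, Classical.arbitrary _⟩⟩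
  exact Finset.le_sup' (fun p : Σ s : S, X s × Y s => U p.1 p.2.1 p.2.2)
    (Finset.mem_univ (⟨s, x, y⟩ : Σ s : S, X s × Y s))

lemma bellmanMaxMin_mono (hlam : 0 ≤ lam) {m m' : S → ℝ} (h : ∀ t, m t ≤ m' t) (s : S) :
    bellmanMaxMin X Y T U lam m s ≤ bellmanMaxMin X Y T U lam m' s := by
  apply Finset.sup'_le
  intro x _
  refine le_trans ?_ (Finset.le_sup' _ (Finset.mem_univ x))
  refine Finset.le_inf' _ _ fun y hy => le_trans (Finset.inf'_le _ hy) ?_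
  nlinarith [h (T s x y)]

lemma bellmanMaxMin_bounds (hlam : lam ∈ Set.Ioo (0:ℝ) 1) {m : S → ℝ}
    (hlo : ∀ t, utilMin X Y U ≤ m t) (hhi : ∀ t, m t ≤ utilMax X Y U) (s : S) :
    utilMin X Y U ≤ bellmanMaxMin X Y T U lam m s ∧
      bellmanMaxMin X Y T U lam m s ≤ utilMax X Y U := by
  obtain ⟨h0, h1⟩ := hlam
  constructor
  · obtain ⟨x⟩ := (inferInstance : Nonempty (X s))
    refine le_trans ?_ (Finset.le_sup' _ (Finset.mem_univ x))
    apply Finset.le_inf'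
    intro y _
    have h2 := hlo (T s x y)
    have h3 := utilMin_le X Y U s x y
    nlinarith
  · apply Finset.sup'_le
    intro x _
    obtain ⟨y⟩ := (inferInstance : Nonempty (Y s))
    refine le_trans (Finset.inf'_le _ (Finset.mem_univ y)) ?_
    have h2 := hhi (T s x y)
    have h3 := le_utilMax X Y U s x y
    nlinarith

end aux

/-- The iteration `M_{·,0} = const M₀`, `M_{·,n+1} = G(M_{·,n})` is
non-increasing in `n` at each state, bounded below by `m₀`, hence converges, and its
pointwise limit satisfies the max–min fixed point equation. -/
theorem bellman_maxmin_iteration_converges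
    {S : Type*} [Fintype S] [Nonempty S]
    (X Y : S → Type*)
    [∀ s, Fintype (X s)] [∀ s, Nonempty (X s)]
    [∀ s, Fintype (Y s)] [∀ s, Nonempty (Y s)]
    (T : ∀ s, X s → Y s → S) (U : ∀ s, X s → Y s → ℝ)
    (lam : ℝ) (hlam : lam ∈ Set.Ioo (0 : ℝ) 1) :
    (∀ s, Antitone fun n : ℕ =>
      (bellmanMaxMin X Y T U lam)^[n] (fun _ => utilMax X Y U) s) ∧
    (∀ n : ℕ, ∀ s,
      utilMin X Y U ≤ (bellmanMaxMin X Y T U lam)^[n] (fun _ => utilMax X Y U) s) ∧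
    (∃ M : S → ℝ,
      (∀ s, Filter.Tendsto
        (fun n : ℕ => (bellmanMaxMin X Y T U lam)^[n] (fun _ => utilMax X Y U) s)
        Filter.atTop (nhds (M s))) ∧
      (∀ s, M s = bellmanMaxMin X Y T U lam M s)) := by
  set G := bellmanMaxMin X Y T U lam with hG
  set Mseq : ℕ → S → ℝ := fun n => G^[n] (fun _ => utilMax X Y U) with hMseq
  have hsucc : ∀ n, Mseq (n+1) = G (Mseq n) := fun n => Function.iterate_succ_apply' G n _
  -- bounds
  have hbdd : ∀ n t, utilMin X Y U ≤ Mseq n t ∧ Mseq n t ≤ utilMax X Y U := by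
    intro n
    induction n with
    | zero =>
      intro t
      simp only [hMseq, Function.iterate_zero, id]
      haveI : Nonempty ((s : S) × X s × Y s) :=
        ⟨⟨Classical.arbitrary S, Classical.arbitrary _, Classical.arbitrary _⟩⟩
      exact ⟨le_trans (utilMin_le X Y U t (Classical.arbitrary _) (Classical.arbitrary _))
        (le_utilMax X Y U t (Classical.arbitrary _) (Classical.arbitrary _)), le_refl _⟩
    | succ n ih =>
      intro t
      rw [hsucc]
      exact bellmanMaxMin_bounds X Y T U lam hlam (fun u => (ih u).1) (fun u => (ih u).2) t
  -- step decrease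
  have hstep : ∀ n t, Mseq (n+1) t ≤ Mseq n t := by
    intro n
    induction n with
    | zero =>
      intro t
      rw [hsucc]
      exact (bellmanMaxMin_bounds X Y T U lam hlam
        (fun u => (hbdd 0 u).1) (fun u => (hbdd 0 u).2) t).2
    | succ n ih =>
      intro t
      rw [hsucc (n+1)]
      conv_rhs => rw [hsucc n]
      rw [hG]
      exact bellmanMaxMin_mono X Y T U lam (le_of_lt hlam.1) ih t
  have hanti : ∀ s, Antitone fun n => Mseq n s := by
    intro s
    exact antitone_nat_of_succ_le fun n => hstep n s
  refine ⟨hanti, fun n s => (hbdd n s).1, ?_⟩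
  -- convergence
  have hconv : ∀ s, ∃ L : ℝ, Tendsto (fun n => Mseq n s) atTop (nhds L) := by
    intro s
    refine ⟨⨅ n, Mseq n s, tendsto_atTop_ciInf (hanti s) ⟨utilMin X Y U, ?_⟩⟩
    rintro v ⟨n, rfl⟩
    exact (hbdd n s).1
  choose M hM using hconv
  refine ⟨M, hM, fun s => ?_⟩
  have h1 : Tendsto (fun n => Mseq (n+1) s) atTop (nhds (M s)) :=
    (hM s).comp (tendsto_add_atTop_nat 1)
  have h2 : Tendsto (fun n => G (Mseq n) s) atTop (nhds (G M s)) := by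
    apply Filter.Tendsto.finset_sup'_nhds_apply
    intro x _
    apply Filter.Tendsto.finset_inf'_nhds_apply
    intro y _
    exact ((hM _).const_mul lam).add_const _
  have h3 : Tendsto (fun n => Mseq (n+1) s) atTop (nhds (G M s)) := by
    simpa only [hsucc] using h2
  exact tendsto_nhds_unique h1 h3
end

section
/- Uniqueness of the fixed point equations: there is at most one function m : S → ℝ satisfying m(s) = min_{x ∈ X s} max_{y ∈ Y s} (λ·m(T(x,y;s)) + U_λ(x,y;s)) for all s ∈ S, and at most one function M : S → ℝ satisfying M(s) = max_{x ∈ X s} min_{y ∈ Y s} (λ·M(T(x,y;s)) + U_λ(x,y;s)) for all s ∈ S. -/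
open Filter Topology

lemma abs_sup'_sub_sup'_le {ι : Type*} [Fintype ι] [Nonempty ι]
    (f g : ι → ℝ) (c : ℝ) (h : ∀ i, |f i - g i| ≤ c) :
    |Finset.univ.sup' Finset.univ_nonempty f - Finset.univ.sup' Finset.univ_nonempty g| ≤ c := by
  rw [abs_sub_le_iff]
  constructor
  · rw [sub_le_iff_le_add]
    apply Finset.sup'_le
    intro i _
    have := (abs_sub_le_iff.1 (h i)).1
    have h2 : g i ≤ Finset.univ.sup' Finset.univ_nonempty g := Finset.le_sup' g (Finset.mem_univ i)
    linarith
  · rw [sub_le_iff_le_add]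
    apply Finset.sup'_le
    intro i _
    have := (abs_sub_le_iff.1 (h i)).2
    have h2 : f i ≤ Finset.univ.sup' Finset.univ_nonempty f := Finset.le_sup' f (Finset.mem_univ i)
    linarith

lemma abs_inf'_sub_inf'_le {ι : Type*} [Fintype ι] [Nonempty ι]
    (f g : ι → ℝ) (c : ℝ) (h : ∀ i, |f i - g i| ≤ c) :
    |Finset.univ.inf' Finset.univ_nonempty f - Finset.univ.inf' Finset.univ_nonempty g| ≤ c := by
  rw [abs_sub_le_iff]
  constructor
  · rw [sub_le_iff_le_add]
    obtain ⟨i, -, hi⟩ := Finset.exists_mem_eq_inf' (Finset.univ_nonempty (α := ι)) g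
    rw [hi]
    have h1 : Finset.univ.inf' Finset.univ_nonempty f ≤ f i := Finset.inf'_le f (Finset.mem_univ i)
    have := (abs_sub_le_iff.1 (h i)).1
    linarith
  · rw [sub_le_iff_le_add]
    obtain ⟨i, -, hi⟩ := Finset.exists_mem_eq_inf' (Finset.univ_nonempty (α := ι)) f
    rw [hi]
    have h1 : Finset.univ.inf' Finset.univ_nonempty g ≤ g i := Finset.inf'_le g (Finset.mem_univ i)
    have := (abs_sub_le_iff.1 (h i)).2
    linarith

lemma contraction_unique_fixed {S : Type*} [Fintype S] [Nonempty S]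
    (F : (S → ℝ) → S → ℝ) (lam : ℝ) (hlam : lam ∈ Set.Ioo (0 : ℝ) 1)
    (hF : ∀ m m' : S → ℝ, ∀ s,
      |F m s - F m' s| ≤ lam * Finset.univ.sup' Finset.univ_nonempty (fun t => |m t - m' t|))
    (m m' : S → ℝ) (hm : ∀ s, m s = F m s) (hm' : ∀ s, m' s = F m' s) : m = m' := by
  set D : ℝ := Finset.univ.sup' Finset.univ_nonempty (fun t => |m t - m' t|) with hD
  have hDle : D ≤ lam * D := by
    apply Finset.sup'_le
    intro s _
    rw [hm s, hm' s]
    exact hF m m' s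
  have hD0 : 0 ≤ D := by
    obtain ⟨t⟩ := ‹Nonempty S›
    exact le_trans (abs_nonneg _) (Finset.le_sup' (fun t => |m t - m' t|) (Finset.mem_univ t))
  have : D ≤ 0 := by nlinarith [hlam.1, hlam.2]
  have hDzero : D = 0 := le_antisymm this hD0
  funext s
  have hsle : |m s - m' s| ≤ D := Finset.le_sup' (fun t => |m t - m' t|) (Finset.mem_univ s)
  rw [hDzero] at hsle
  have := abs_nonneg (m s - m' s)
  have : |m s - m' s| = 0 := le_antisymm hsle this
  have := abs_eq_zero.1 this
  linarith

/-- Uniqueness of the fixed point equations: there is at most one fixed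
point of the min–max operator, and at most one fixed point of the max–min operator. -/
theorem bellman_fixed_points_unique
    {S : Type*} [Fintype S] [Nonempty S]
    (X Y : S → Type*)
    [∀ s, Fintype (X s)] [∀ s, Nonempty (X s)]
    [∀ s, Fintype (Y s)] [∀ s, Nonempty (Y s)]
    (T : ∀ s, X s → Y s → S) (U : ∀ s, X s → Y s → ℝ)
    (lam : ℝ) (hlam : lam ∈ Set.Ioo (0 : ℝ) 1) :
    (∀ m m' : S → ℝ,
      (∀ s, m s = bellmanMinMax X Y T U lam m s) →
      (∀ s, m' s = bellmanMinMax X Y T U lam m' s) → m = m') ∧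
    (∀ M M' : S → ℝ,
      (∀ s, M s = bellmanMaxMin X Y T U lam M s) →
      (∀ s, M' s = bellmanMaxMin X Y T U lam M' s) → M = M') := by
  have key : ∀ (m m' : S → ℝ) (s : S) (x : X s) (y : Y s),
      |(lam * m (T s x y) + (1 - lam) * U s x y) -
       (lam * m' (T s x y) + (1 - lam) * U s x y)| ≤
      lam * Finset.univ.sup' Finset.univ_nonempty (fun t => |m t - m' t|) := by
    intro m m' s x y
    have h1 : (lam * m (T s x y) + (1 - lam) * U s x y) -
        (lam * m' (T s x y) + (1 - lam) * U s x y) = lam * (m (T s x y) - m' (T s x y)) := by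
      ring
    rw [h1, abs_mul, abs_of_pos hlam.1]
    apply mul_le_mul_of_nonneg_left _ (le_of_lt hlam.1)
    exact Finset.le_sup' (fun t => |m t - m' t|) (Finset.mem_univ (T s x y))
  constructor
  · apply contraction_unique_fixed _ lam hlam
    intro m m' s
    apply abs_inf'_sub_inf'_le
    intro x
    apply abs_sup'_sub_sup'_le
    intro y
    exact key m m' s x y
  · apply contraction_unique_fixed _ lam hlam
    intro m m' s
    apply abs_sup'_sub_sup'_le
    intro x
    apply abs_inf'_sub_inf'_le
    intro y
    exact key m m' s x y
end

section
/- Global convergence of the iterative process with error bound: let m : S → ℝ be a fixed point of F (i.e. F(m) = m) with m₀ ≤ m(s) ≤ M₀ for all s. Then for every initialization m' : S → ℝ with m₀ ≤ m'(s) ≤ M₀ for all s, and for every n ≥ 0 and every s ∈ S, |m(s) − F^n(m')(s)| ≤ λ^n · (M₀ − m₀); in particular F^n(m') converges pointwise to m as n → ∞. -/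
open Filter Topology

lemma my_abs_sup'_sub {ι : Type*} (s : Finset ι) (h : s.Nonempty) (f g : ι → ℝ) (C : ℝ)
    (hfg : ∀ i ∈ s, |f i - g i| ≤ C) : |s.sup' h f - s.sup' h g| ≤ C := by
  rw [abs_sub_le_iff]
  constructor
  · rw [sub_le_iff_le_add]
    refine Finset.sup'_le _ _ fun i hi => ?_
    have h1 := (abs_sub_le_iff.mp (hfg i hi)).1
    have h2 := Finset.le_sup' g hi
    linarith
  · rw [sub_le_iff_le_add]
    refine Finset.sup'_le _ _ fun i hi => ?_
    have h1 := (abs_sub_le_iff.mp (hfg i hi)).2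
    have h2 := Finset.le_sup' f hi
    linarith

lemma my_abs_inf'_sub {ι : Type*} (s : Finset ι) (h : s.Nonempty) (f g : ι → ℝ) (C : ℝ)
    (hfg : ∀ i ∈ s, |f i - g i| ≤ C) : |s.inf' h f - s.inf' h g| ≤ C := by
  rw [abs_sub_le_iff]
  constructor
  · obtain ⟨i, hi, hig⟩ := Finset.exists_mem_eq_inf' h g
    have h1 := (abs_sub_le_iff.mp (hfg i hi)).1
    have h2 := Finset.inf'_le f hi
    rw [hig]; linarith
  · obtain ⟨i, hi, hif⟩ := Finset.exists_mem_eq_inf' h f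
    have h1 := (abs_sub_le_iff.mp (hfg i hi)).2
    have h2 := Finset.inf'_le g hi
    rw [hif]; linarith

lemma bellman_contraction {S : Type*} (X Y : S → Type*)
    [∀ s, Fintype (X s)] [∀ s, Nonempty (X s)]
    [∀ s, Fintype (Y s)] [∀ s, Nonempty (Y s)]
    (T : ∀ s, X s → Y s → S) (U : ∀ s, X s → Y s → ℝ) (lam : ℝ) (hlam : 0 ≤ lam)
    (a b : S → ℝ) (C : ℝ) (hC : ∀ t, |a t - b t| ≤ C) (s : S) :
    |bellmanMinMax X Y T U lam a s - bellmanMinMax X Y T U lam b s| ≤ lam * C := by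
  unfold bellmanMinMax
  refine my_abs_inf'_sub _ _ _ _ _ fun x _ => ?_
  refine my_abs_sup'_sub _ _ _ _ _ fun y _ => ?_
  have : lam * a (T s x y) + (1 - lam) * U s x y - (lam * b (T s x y) + (1 - lam) * U s x y)
      = lam * (a (T s x y) - b (T s x y)) := by ring
  rw [this, abs_mul, abs_of_nonneg hlam]
  exact mul_le_mul_of_nonneg_left (hC _) hlam

/-- Global convergence with error bound: if `m` is a fixed point of `F`
with values in `[m₀, M₀]`, then for every initialization `m'` with values in `[m₀, M₀]`,
`|m(s) − F^n(m')(s)| ≤ λ^n (M₀ − m₀)` for all `n` and `s`; in particular `F^n(m')`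
converges pointwise to `m`. -/
theorem bellman_global_convergence
    {S : Type*} [Fintype S] [Nonempty S]
    (X Y : S → Type*)
    [∀ s, Fintype (X s)] [∀ s, Nonempty (X s)]
    [∀ s, Fintype (Y s)] [∀ s, Nonempty (Y s)]
    (T : ∀ s, X s → Y s → S) (U : ∀ s, X s → Y s → ℝ)
    (lam : ℝ) (hlam : lam ∈ Set.Ioo (0 : ℝ) 1)
    (m : S → ℝ) (hfix : bellmanMinMax X Y T U lam m = m)
    (hm : ∀ s, utilMin X Y U ≤ m s ∧ m s ≤ utilMax X Y U)
    (m' : S → ℝ) (hm' : ∀ s, utilMin X Y U ≤ m' s ∧ m' s ≤ utilMax X Y U) :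
    (∀ n : ℕ, ∀ s,
      |m s - (bellmanMinMax X Y T U lam)^[n] m' s| ≤
        lam ^ n * (utilMax X Y U - utilMin X Y U)) ∧
    (∀ s, Filter.Tendsto
      (fun n : ℕ => (bellmanMinMax X Y T U lam)^[n] m' s)
      Filter.atTop (nhds (m s))) := by
  obtain ⟨hl0, hl1⟩ := hlam
  have hbound : ∀ n : ℕ, ∀ s,
      |m s - (bellmanMinMax X Y T U lam)^[n] m' s| ≤
        lam ^ n * (utilMax X Y U - utilMin X Y U) := by
    intro n
    induction n with
    | zero =>
      intro s
      obtain ⟨h1, h2⟩ := hm s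
      obtain ⟨h3, h4⟩ := hm' s
      simp only [Function.iterate_zero, id, pow_zero, one_mul]
      rw [abs_sub_le_iff]
      constructor <;> linarith
    | succ n ih =>
      intro s
      rw [Function.iterate_succ_apply']
      have key := bellman_contraction X Y T U lam hl0.le m
        ((bellmanMinMax X Y T U lam)^[n] m') _ ih s
      rw [hfix] at key
      calc |m s - bellmanMinMax X Y T U lam ((bellmanMinMax X Y T U lam)^[n] m') s|
          ≤ lam * (lam ^ n * (utilMax X Y U - utilMin X Y U)) := key
        _ = lam ^ (n + 1) * (utilMax X Y U - utilMin X Y U) := by ring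
  refine ⟨hbound, fun s => ?_⟩
  rw [tendsto_iff_dist_tendsto_zero]
  have hlim : Filter.Tendsto (fun n : ℕ => lam ^ n * (utilMax X Y U - utilMin X Y U))
      Filter.atTop (nhds 0) := by
    simpa using (tendsto_pow_atTop_nhds_zero_of_lt_one hl0.le hl1).mul_const
      (utilMax X Y U - utilMin X Y U)
  refine squeeze_zero (fun n => dist_nonneg) (fun n => ?_) hlim
  rw [Real.dist_eq, abs_sub_comm]
  exact hbound n s
end
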